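/- arXiv:2010.00208 — 7 statements merged into one kernel-verified Lean document; each statement's English description precedes it below -/
import Mathlib

section
/- Let G be an abelian group and let φ₀,...,φ_N : G → ℂ satisfy the multinomial identity φ_n(x₁+⋯+x_l) = Σ_{k₁+⋯+k_l=n} (n choose k₁,...,k_l) ∏_t φ_{k_t}(x_t) for all x_i ∈ G, n = 0,...,N, where l ≥ 2. If φ₀(0) = 0, then all functions φ₀,...,φ_N are identically zero. -/
/-!
Strong induction on `n`, evaluating the identity at `x = Pi.single 0 y`. Every term of the
right-hand side then contains a vanishing factor: for `n = 0` the factor `φ 0 0` at a second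
index, and for `n > 0` a factor `φ (k t) (x t)` with `k t < n`, since at least two indices share
the total `n`.
-/

lemma Fintype.exists_lt_of_sum_eq {ι : Type*} [Fintype ι] [Nontrivial ι] {k : ι → ℕ} {n : ℕ}
    (hn : 0 < n) (hk : ∑ i, k i = n) : ∃ i, k i < n := by
  by_contra! hge
  obtain ⟨i, j, hij⟩ := exists_pair_ne ι
  have := Finset.add_le_sum (fun i _ ↦ Nat.zero_le (k i)) (Finset.mem_univ i)
    (Finset.mem_univ j) hij
  have := hge i
  have := hge j
  omega

theorem stmt_0 {G : Type*} [AddCommGroup G] (l N : ℕ) (hl : 2 ≤ l)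
    (φ : ℕ → G → ℂ)
    (h : ∀ n ≤ N, ∀ x : Fin l → G,
      φ n (∑ i, x i) =
        ∑ k ∈ Finset.Nat.antidiagonalTuple l n,
          (Nat.multinomial Finset.univ k : ℂ) * ∏ t, φ (k t) (x t))
    (h0 : φ 0 0 = 0) :
    ∀ n ≤ N, ∀ x : G, φ n x = 0 := by
  have : Nontrivial (Fin l) := Fin.nontrivial_iff_two_le.mpr hl
  have : NeZero l := ⟨by omega⟩
  obtain ⟨j, hj⟩ := exists_ne (0 : Fin l)
  intro n
  induction n using Nat.strong_induction_on with
  | _ n ih =>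
  intro hn y
  rw [← Fintype.sum_pi_single' (0 : Fin l) y, h n hn]
  refine Finset.sum_eq_zero fun k hk ↦ mul_eq_zero_of_right _ ?_
  rw [Finset.Nat.mem_antidiagonalTuple] at hk
  rcases Nat.eq_zero_or_pos n with rfl | hpos
  · have hkj : k j = 0 := Finset.sum_eq_zero_iff.mp hk j (Finset.mem_univ j)
    exact Finset.prod_eq_zero (Finset.mem_univ j) (by simp [hkj, hj, h0])
  · obtain ⟨t, ht⟩ := Fintype.exists_lt_of_sum_eq hpos hk
    exact Finset.prod_eq_zero (Finset.mem_univ t) (ih _ ht (ht.le.trans hn) _)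
end

section
/- Let G be an abelian group, l ≥ 2, and let φ₀,...,φ_N : G → ℂ satisfy φ_n(x₁+⋯+x_l) = Σ_{k₁+⋯+k_l=n} (n choose k₁,...,k_l) ∏_t φ_{k_t}(x_t) for all x_i ∈ G and n = 0,...,N. If φ₀(0) = 1, then φ₀(x+y) = φ₀(x)φ₀(y) and φ_n(x+y) = Σ_{k=0}^{n} C(n,k) φ_k(x) φ_{n-k}(y) for all x,y ∈ G and n ≤ N; i.e. the sequence is a generalized moment sequence of order N. -/
/-!
Write `Φ y = ∑ₙ φ n y Tⁿ / n!`, truncated at order `N`; the hypothesis says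
`Φ (x₁ + ⋯ + x_l) = Φ x₁ ⋯ Φ x_l`. Putting every `x_t = 0` and inducting on `n`, the only
surviving terms of degree `n > 0` are those where a single factor carries all of `n`, so
`φ n 0 = l * φ n 0` and hence `φ n 0 = 0` because `l ≠ 1`. Thus `Φ 0 = 1`, and substituting
`x, y, 0, …, 0` (possible as `l ≥ 2`) leaves exactly the binomial identity for `Φ (x + y)`.
-/

open Finset

namespace Finset

variable {ι M μ : Type*} [DecidableEq ι] [AddCommMonoid M]

section piAntidiag

variable [AddCommMonoid μ] [HasAntidiagonal μ] [DecidableEq μ] {s t : Finset ι}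

theorem piAntidiag_mono (hst : s ⊆ t) (n : μ) : s.piAntidiag n ⊆ t.piAntidiag n := by
  intro k hk
  rw [mem_piAntidiag] at hk ⊢
  refine ⟨?_, fun i hi => hst (hk.2 i hi)⟩
  rw [← hk.1]
  exact (sum_subset hst fun i _ his => by_contra fun hki => his (hk.2 i hki)).symm

theorem mem_piAntidiag_of_subset (hst : s ⊆ t) {n : μ} {k : ι → μ} (hk : k ∈ t.piAntidiag n)
    (hk0 : ∀ i ∈ t, i ∉ s → k i = 0) : k ∈ s.piAntidiag n := by
  rw [mem_piAntidiag] at hk ⊢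
  have hks : ∀ i, k i ≠ 0 → i ∈ s := fun i hki =>
    by_contra fun his => hki (hk0 i (hk.2 i hki) his)
  refine ⟨?_, hks⟩
  rw [← hk.1]
  exact sum_subset hst fun i _ his => by_contra fun hki => his (hks i hki)

end piAntidiag

theorem eq_pi_single_of_mem_piAntidiag {s : Finset ι} {n : ℕ} {k : ι → ℕ}
    (hk : k ∈ s.piAntidiag n) {i : ι} (hi : i ∈ s) (hki : k i = n) : k = Pi.single i n := by
  rw [mem_piAntidiag] at hk
  funext j
  rcases eq_or_ne j i with rfl | hji
  · simp [hki]
  rw [Pi.single_eq_of_ne hji]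
  by_contra hkj
  have hle : k i + k j ≤ ∑ t ∈ s, k t :=
    add_le_sum (fun _ _ => Nat.zero_le _) hi (hk.2 j hkj) hji.symm
  have hsum : ∑ t ∈ s, k t = n := hk.1
  omega

theorem sum_piAntidiag_eq_sum_pi_single {s : Finset ι} {n : ℕ} (hn : n ≠ 0)
    {f : (ι → ℕ) → M} (hf : ∀ k ∈ s.piAntidiag n, (∀ i ∈ s, k i ≠ n) → f k = 0) :
    ∑ k ∈ s.piAntidiag n, f k = ∑ i ∈ s, f (Pi.single i n) := by
  classical
  have hsub : s.image (Pi.single · n) ⊆ s.piAntidiag n := by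
    intro k hk
    obtain ⟨i, hi, rfl⟩ := mem_image.1 hk
    simp +contextual [Pi.single_apply, hi]
  have hinj : Set.InjOn (Pi.single · n : ι → ι → ℕ) s := fun i _ j _ hij => by
    simpa [Pi.single_apply, hn, eq_comm] using congrFun hij j
  rw [← sum_subset hsub, sum_image hinj]
  intro k hk hks
  refine hf k hk fun i hi hki => hks (mem_image.2 ⟨i, hi, ?_⟩)
  exact (eq_pi_single_of_mem_piAntidiag hk hi hki).symm

theorem sum_piAntidiag_pair {a b : ι} (hab : a ≠ b) (n : ℕ) (f : ℕ → ℕ → M) :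
    ∑ k ∈ ({a, b} : Finset ι).piAntidiag n, f (k a) (k b) =
      ∑ p ∈ antidiagonal n, f p.1 p.2 := by
  refine sum_nbij' (fun k => (k a, k b)) (fun p => Pi.single a p.1 + Pi.single b p.2)
    ?_ ?_ ?_ ?_ fun _ _ => rfl
  · intro k hk
    simp_all [sum_pair hab]
  · intro p hp
    refine mem_piAntidiag.2 ⟨by simp_all [sum_pair hab, hab.symm], fun j hj => ?_⟩
    by_contra hjab
    simp_all
  · intro k hk
    funext j
    by_cases hja : j = a
    · subst hja; simp [hab.symm]
    by_cases hjb : j = b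
    · subst hjb; simp [hab]
    simp only [Pi.add_apply, Pi.single_eq_of_ne hja, Pi.single_eq_of_ne hjb, add_zero]
    by_contra hkj
    simpa [hja, hjb] using (mem_piAntidiag.1 hk).2 j (Ne.symm hkj)
  · intro p _
    simp [hab, hab.symm]

end Finset

section MultinomialSum

variable {G R ι : Type*} [DecidableEq ι]

/-- The coefficient of `Tⁿ / n!` in `∏ i ∈ s, Φ (x i)`, where `Φ y = ∑ₙ φ n y Tⁿ / n!`. -/
def multinomialSum [CommSemiring R] (φ : ℕ → G → R) (s : Finset ι) (n : ℕ) (x : ι → G) : R :=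
  ∑ k ∈ s.piAntidiag n, (Nat.multinomial s k : R) * ∏ i ∈ s, φ (k i) (x i)

section CommSemiring

variable [CommSemiring R] {φ : ℕ → G → R}

theorem multinomialSum_pair {a b : ι} (hab : a ≠ b) (n : ℕ) (x : ι → G) :
    multinomialSum φ {a, b} n x =
      ∑ j ∈ range (n + 1), (n.choose j : R) * φ j (x a) * φ (n - j) (x b) := by
  let f : ℕ → ℕ → R := fun i j => ((i + j).choose i : R) * φ i (x a) * φ j (x b)
  calc multinomialSum φ {a, b} n x
      = ∑ k ∈ ({a, b} : Finset ι).piAntidiag n, f (k a) (k b) := by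
        refine sum_congr rfl fun k _ => ?_
        rw [Nat.binomial_eq_choose hab, prod_pair hab, ← mul_assoc]
    _ = ∑ j ∈ range (n + 1), f j (n - j) := by
        rw [sum_piAntidiag_pair hab, Nat.sum_antidiagonal_eq_sum_range_succ f]
    _ = _ := by
        refine sum_congr rfl fun j hj => ?_
        simp only [f]
        rw [Nat.add_sub_cancel' (Nat.lt_succ_iff.1 (mem_range.1 hj))]

variable [Zero G]

theorem multinomialSum_zero {s : Finset ι} {n : ℕ} (hn : n ≠ 0)
    (hφ : ∀ m, 0 < m → m < n → φ m 0 = 0) (h0 : φ 0 0 = 1) :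
    multinomialSum φ s n 0 = #s * φ n 0 := by
  unfold multinomialSum
  rw [sum_piAntidiag_eq_sum_pi_single hn]
  · have hterm : ∀ i ∈ s, (Nat.multinomial s (Pi.single i n) : R) *
        ∏ j ∈ s, φ ((Pi.single i n : ι → ℕ) j) ((0 : ι → G) j) = φ n 0 := fun i hi => by
      rw [Nat.multinomial_single, Nat.cast_one, one_mul, prod_eq_single_of_mem i hi
        fun j _ hji => by rw [Pi.single_eq_of_ne hji, Pi.zero_apply, h0]]
      simp
    rw [sum_congr rfl hterm, sum_const, nsmul_eq_mul]
  · intro k hk hkn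
    obtain ⟨i, hi, hki⟩ := exists_ne_zero_of_sum_ne_zero ((mem_piAntidiag.1 hk).1.trans_ne hn)
    have hle : k i ≤ n := (mem_piAntidiag.1 hk).1 ▸ single_le_sum (fun _ _ => Nat.zero_le _) hi
    rw [prod_eq_zero hi (hφ _ (Nat.pos_of_ne_zero hki) (lt_of_le_of_ne hle (hkn i hi))),
      mul_zero]

theorem multinomialSum_eq_of_subset {s t : Finset ι} {n : ℕ} {x : ι → G}
    (hφ : ∀ m, 0 < m → m ≤ n → φ m 0 = 0) (h0 : φ 0 0 = 1) (hst : s ⊆ t)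
    (hx : ∀ i ∈ t, i ∉ s → x i = 0) :
    multinomialSum φ t n x = multinomialSum φ s n x := by
  unfold multinomialSum
  rw [← sum_subset (piAntidiag_mono hst n)]
  · refine sum_congr rfl fun k hk => ?_
    have hk0 : ∀ i ∈ t, i ∉ s → k i = 0 := fun i _ his =>
      by_contra fun hki => his ((mem_piAntidiag.1 hk).2 i hki)
    rw [Nat.multinomial_congr_of_sdiff hst
      (fun i hi => hk0 i (mem_sdiff.1 hi).1 (mem_sdiff.1 hi).2) fun _ _ => rfl,
      prod_subset hst fun i hit his => by rw [hk0 i hit his, hx i hit his, h0]]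
  · intro k hk hks
    obtain ⟨i, hit, his, hki⟩ : ∃ i ∈ t, i ∉ s ∧ k i ≠ 0 := by
      by_contra! hk0
      exact hks (mem_piAntidiag_of_subset hst hk hk0)
    have hle : k i ≤ n := (mem_piAntidiag.1 hk).1 ▸ single_le_sum (fun _ _ => Nat.zero_le _) hit
    rw [prod_eq_zero hit (by rw [hx i hit his, hφ _ (Nat.pos_of_ne_zero hki) hle]), mul_zero]

end CommSemiring

theorem apply_zero_eq_zero_of_eq_multinomialSum [CommRing R] [IsDomain R] [CharZero R] [Zero G]
    {φ : ℕ → G → R} {s : Finset ι} {N : ℕ} (hs : #s ≠ 1) (h0 : φ 0 0 = 1)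
    (h : ∀ n ≤ N, φ n 0 = multinomialSum φ s n 0) : ∀ n ≤ N, 0 < n → φ n 0 = 0 := by
  intro n
  induction n using Nat.strong_induction_on with
  | _ n ih =>
    intro hnN hn
    have hfix := h n hnN
    rw [multinomialSum_zero hn.ne' (fun m hm hmn => ih m hmn (hmn.le.trans hnN) hm) h0] at hfix
    have hs1 : (#s : R) - 1 ≠ 0 := sub_ne_zero.2 (Nat.cast_ne_one.2 hs)
    exact (mul_eq_zero.1 (by linear_combination -hfix : ((#s : R) - 1) * φ n 0 = 0)).resolve_left
      hs1

end MultinomialSum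

theorem stmt_1 {G : Type*} [AddCommGroup G] (l N : ℕ) (hl : 2 ≤ l)
    (φ : ℕ → G → ℂ)
    (h : ∀ n ≤ N, ∀ x : Fin l → G,
      φ n (∑ i, x i) =
        ∑ k ∈ Finset.Nat.antidiagonalTuple l n,
          (Nat.multinomial Finset.univ k : ℂ) * ∏ t, φ (k t) (x t))
    (h0 : φ 0 0 = 1) :
    ∀ n ≤ N, ∀ x y : G,
      φ n (x + y) = ∑ k ∈ Finset.range (n + 1),
        (n.choose k : ℂ) * φ k x * φ (n - k) y := by
  have hφ : ∀ n ≤ N, ∀ x : Fin l → G, φ n (∑ i, x i) = multinomialSum φ univ n x := by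
    intro n hn x
    rw [h n hn x, ← piAntidiag_univ_fin_eq_antidiagonalTuple]
    rfl
  have hzero : ∀ n ≤ N, 0 < n → φ n 0 = 0 :=
    apply_zero_eq_zero_of_eq_multinomialSum (s := (univ : Finset (Fin l)))
      (by rw [card_univ, Fintype.card_fin]; omega) h0 fun n hn => by simpa using hφ n hn 0
  intro n hn x y
  let a : Fin l := ⟨0, by omega⟩
  let b : Fin l := ⟨1, by omega⟩
  have hab : a ≠ b := by simp [a, b, Fin.ext_iff]
  let X : Fin l → G := Pi.single a x + Pi.single b y
  have hX : ∑ i, X i = x + y := by simp [X, sum_add_distrib]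
  have hX0 : ∀ i ∈ univ, i ∉ ({a, b} : Finset (Fin l)) → X i = 0 := by
    intro i _ hi
    simp_all [X]
  rw [← hX, hφ n hn X, multinomialSum_eq_of_subset (fun m hm hmn => hzero m (hmn.trans hn) hm)
    h0 (subset_univ _) hX0, multinomialSum_pair hab]
  simp [X, hab, hab.symm]
end

section
/- Under the hypotheses of the multinomial identity with l ≥ 2 and φ₀(0) ≠ 0, one has φ_n(0) = 0 for every n with 1 ≤ n ≤ N. -/
/-!
Put `a n = φ n 0`. Taking every `x i = 0` gives
`a n = ∑_{k₁+⋯+k_l=n} (n choose k₁,…,k_l) a_{k₁} ⋯ a_{k_l}`. For `n = 0` this reads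
`a₀ = a₀^l`, so `a₀^(l-1) = 1`. For `n ≥ 1`, by strong induction every term with all `k_t < n`
contains a factor `a_{k_t} = 0` with `0 < k_t < n`; only the `l` tuples `n·e_t` survive, each
contributing `a_n a₀^(l-1) = a_n`. Hence `a_n = l a_n`, and `a_n = 0` since `l ≠ 1`.
-/

open Finset

namespace Finset.Nat

lemma pi_single_mem_antidiagonalTuple {l : ℕ} (t : Fin l) (n : ℕ) :
    Pi.single t n ∈ antidiagonalTuple l n := by
  simp [mem_antidiagonalTuple]

lemma eq_pi_single_of_mem_antidiagonalTuple {l n : ℕ} {k : Fin l → ℕ}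
    (hk : k ∈ antidiagonalTuple l n) {t : Fin l} (ht : k t = n) : k = Pi.single t n := by
  rw [mem_antidiagonalTuple, ← add_sum_erase _ _ (mem_univ t), ht, add_eq_left,
    sum_eq_zero_iff] at hk
  ext s
  rcases eq_or_ne s t with rfl | hst
  · simp [ht]
  · simpa [hst] using hk s (by simp [hst])

lemma sum_antidiagonalTuple_eq_sum_pi_single {M : Type*} [AddCommMonoid M] {l n : ℕ}
    (hn : n ≠ 0) (f : (Fin l → ℕ) → M)
    (hf : ∀ k ∈ antidiagonalTuple l n, (∀ t, k t < n) → f k = 0) :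
    ∑ k ∈ antidiagonalTuple l n, f k = ∑ t, f (Pi.single t n) := by
  have hinj : Function.Injective fun t : Fin l => (Pi.single t n : Fin l → ℕ) := by
    intro i j hij
    by_contra hne
    exact hn (by simpa [hne] using congrFun hij i)
  rw [← sum_image hinj.injOn]
  refine (sum_subset (by simp [subset_iff, pi_single_mem_antidiagonalTuple]) ?_).symm
  intro k hk hk'
  refine hf k hk fun t => lt_of_le_of_ne ?_ fun ht => hk' ?_
  · exact (mem_antidiagonalTuple.mp hk) ▸ single_le_sum (fun _ _ => Nat.zero_le _) (mem_univ t)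
  · exact mem_image.mpr ⟨t, mem_univ t, (eq_pi_single_of_mem_antidiagonalTuple hk ht).symm⟩

end Finset.Nat

open Finset.Nat

lemma prod_apply_pi_single {M : Type*} [CommMonoid M] (f : ℕ → M) {l : ℕ} (t : Fin l) (n : ℕ) :
    ∏ s, f ((Pi.single t n : Fin l → ℕ) s) = f n * f 0 ^ (l - 1) := by
  have : (fun s => f ((Pi.single t n : Fin l → ℕ) s)) =
      Function.update (fun _ => f 0) t (f n) := by
    ext s
    rcases eq_or_ne s t with rfl | hst <;> simp [*]
  rw [this, prod_update_of_mem (mem_univ t), prod_const, card_sdiff, card_univ, Fintype.card_fin]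
  simp

section

variable {R : Type*} [CommRing R] {l : ℕ} {a : ℕ → R}

lemma sum_antidiagonalTuple_multinomial_eq_of_eq_zero {n : ℕ} (hn : n ≠ 0)
    (ha : ∀ m, 0 < m → m < n → a m = 0) :
    ∑ k ∈ antidiagonalTuple l n, (Nat.multinomial univ k : R) * ∏ t, a (k t) =
      l * (a n * a 0 ^ (l - 1)) := by
  rw [sum_antidiagonalTuple_eq_sum_pi_single hn]
  · simp [Nat.multinomial_single, prod_apply_pi_single]
  intro k hk hlt
  obtain ⟨t, ht⟩ : ∃ t, k t ≠ 0 := by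
    by_contra! h0
    exact hn (by simpa [h0] using (mem_antidiagonalTuple.mp hk).symm)
  rw [prod_eq_zero (mem_univ t) (ha _ (Nat.pos_of_ne_zero ht) (hlt t)), mul_zero]

theorem eq_zero_of_eq_sum_antidiagonalTuple [IsDomain R] [CharZero R] {N : ℕ} (hl : 2 ≤ l)
    (h : ∀ n ≤ N, a n = ∑ k ∈ antidiagonalTuple l n, (Nat.multinomial univ k : R) * ∏ t, a (k t))
    (h0 : a 0 ≠ 0) {n : ℕ} (hn : 0 < n) (hnN : n ≤ N) : a n = 0 := by
  have hpow : a 0 ^ (l - 1) = 1 := by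
    have h0l : a 0 = a 0 ^ l := by
      simpa [antidiagonalTuple_zero_right, Nat.multinomial] using h 0 (Nat.zero_le N)
    refine mul_left_cancel₀ h0 ?_
    rw [← pow_succ', Nat.sub_add_cancel (by omega), mul_one, ← h0l]
  induction n using Nat.strong_induction_on with
  | _ n ih =>
    have hrec := h n hnN
    rw [sum_antidiagonalTuple_multinomial_eq_of_eq_zero hn.ne'
      (fun m hm hmn => ih m hmn hm (hmn.le.trans hnN)), hpow, mul_one] at hrec
    have hl1 : (l : R) - 1 ≠ 0 := by
      rw [sub_ne_zero]; exact_mod_cast (by omega : l ≠ 1)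
    exact (mul_eq_zero.mp (by linear_combination -hrec : ((l : R) - 1) * a n = 0)).resolve_left hl1

end

theorem stmt_2 {G : Type*} [AddCommGroup G] (l N : ℕ) (hl : 2 ≤ l)
    (φ : ℕ → G → ℂ)
    (h : ∀ n ≤ N, ∀ x : Fin l → G,
      φ n (∑ i, x i) =
        ∑ k ∈ Finset.Nat.antidiagonalTuple l n,
          (Nat.multinomial Finset.univ k : ℂ) * ∏ t, φ (k t) (x t))
    (h0 : φ 0 0 ≠ 0) :
    ∀ n, 1 ≤ n → n ≤ N → φ n 0 = 0 := by
  intro n hn hnN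
  refine eq_zero_of_eq_sum_antidiagonalTuple (a := fun n => φ n 0) hl (fun m hm => ?_) h0 hn hnN
  simpa using h m hm 0
end

section
/- Let (f_α)_{α ∈ ℕ²} be a generalized moment sequence of rank 2 on an abelian group G. Define φ_n(x) = Σ_{k=0}^{n} C(n,k) f_{(k, n-k)}(x). Then (φ_n)_{n ∈ ℕ} satisfies φ_n(x+y) = Σ_{k=0}^{n} C(n,k) φ_k(x) φ_{n-k}(y) for all x,y ∈ G, i.e. it is a generalized moment sequence of rank 1 with φ₀ = f_{(0,0)}. -/
/-!
With `a + b + c + d = n`, the coefficient `C(n, k) C(k, p) C(n - k, q)` at `(p, q, k - p, n - k - q)`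
is the multinomial `n! / (p! q! (k - p)! (n - k - q)!)`, symmetric in the four indices. Expanding
`f k (n - k) (x + y)` by the rank-2 equation turns the left side into the sum of these coefficients
times `f p q x * f (k - p) (n - k - q) y`; multiplying out the right side gives the same sum with
`f p (k - p) x * f q (n - k - q) y`. Exchanging the two middle indices identifies the sums.
-/

open Finset

theorem Nat.choose_mul_choose_sub_comm (m a b : ℕ) :
    m.choose a * (m - a).choose b = m.choose b * (m - b).choose a := by
  have ha := Nat.choose_mul (n := m) (Nat.le_add_right a b)
  have hb := Nat.choose_mul (n := m) (Nat.le_add_left b a)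
  rw [Nat.add_sub_cancel_left] at ha
  rw [Nat.add_sub_cancel, ← Nat.choose_symm_add] at hb
  rw [← ha, hb]

theorem Nat.choose_mul_choose_mul_choose_eq {n k p q : ℕ} (hk : k ≤ n) (hp : p ≤ k) :
    n.choose k * k.choose p * (n - k).choose q =
      n.choose (p + q) * (p + q).choose p * (n - (p + q)).choose (k - p) := by
  have hn : n - k = n - p - (k - p) := by omega
  rw [Nat.choose_mul hp, Nat.choose_mul (Nat.le_add_right p q), Nat.add_sub_cancel_left,
    mul_assoc, mul_assoc, hn, Nat.choose_mul_choose_sub_comm, Nat.sub_sub]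

section TrinomialSum

variable {R : Type*} [CommSemiring R]

def trinomialSum (n : ℕ) (h : ℕ → ℕ → ℕ → ℕ → R) : R :=
  ∑ k ∈ range (n + 1), ∑ p ∈ range (k + 1), ∑ q ∈ range (n - k + 1),
    (n.choose k * k.choose p * (n - k).choose q : R) * h p q (k - p) (n - k - q)

theorem trinomialSum_swap (n : ℕ) (h : ℕ → ℕ → ℕ → ℕ → R) :
    trinomialSum n h = trinomialSum n (fun a b c d => h a c b d) := by
  simp only [trinomialSum]
  simp_rw [← sum_product']
  rw [sum_sigma', sum_sigma']
  set S := (range (n + 1)).sigma fun k => range (k + 1) ×ˢ range (n - k + 1)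
  -- `(k, p, q) ↦ (p + q, p, k - p)` is an involution of `S` exchanging the roles of `q` and `k - p`
  let e : (Σ _ : ℕ, ℕ × ℕ) → Σ _ : ℕ, ℕ × ℕ := fun s => ⟨s.2.1 + s.2.2, (s.2.1, s.1 - s.2.1)⟩
  have e_mem : ∀ s ∈ S, e s ∈ S := by
    simp only [S, e, mem_sigma, mem_product, mem_range]
    omega
  have e_e : ∀ s ∈ S, e (e s) = s := by
    rintro ⟨k, p, q⟩ hs
    simp only [S, mem_sigma, mem_product, mem_range] at hs
    simp only [e, Sigma.mk.injEq, Prod.mk.injEq, heq_eq_eq, true_and]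
    omega
  refine sum_nbij' e e e_mem e_mem e_e e_e ?_
  rintro ⟨k, p, q⟩ hs
  simp only [S, mem_sigma, mem_product, mem_range] at hs
  simp only [e, show p + q - p = q by omega, show n - (p + q) - (k - p) = n - k - q by omega]
  norm_cast
  rw [Nat.choose_mul_choose_mul_choose_eq (by omega) (by omega)]

end TrinomialSum

theorem stmt_7 {G : Type*} [AddCommGroup G]
    (f : ℕ → ℕ → G → ℂ)
    (hf : ∀ (i j : ℕ) (x y : G),
      f i j (x + y) = ∑ p ∈ Finset.range (i + 1), ∑ q ∈ Finset.range (j + 1),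
        (i.choose p : ℂ) * (j.choose q : ℂ) * f p q x * f (i - p) (j - q) y) :
    ∀ (n : ℕ) (x y : G),
      (∑ k ∈ Finset.range (n + 1), (n.choose k : ℂ) * f k (n - k) (x + y)) =
        ∑ k ∈ Finset.range (n + 1), (n.choose k : ℂ) *
          (∑ i ∈ Finset.range (k + 1), (k.choose i : ℂ) * f i (k - i) x) *
          (∑ j ∈ Finset.range (n - k + 1), ((n - k).choose j : ℂ) * f j (n - k - j) y) := by
  intro n x y
  calc _ = trinomialSum n (fun a b c d => f a b x * f c d y) := by
        refine sum_congr rfl fun k _ => ?_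
        simp only [hf, mul_sum]
        refine sum_congr rfl fun p _ => sum_congr rfl fun q _ => ?_
        ring
    _ = trinomialSum n (fun a b c d => f a c x * f b d y) := trinomialSum_swap n _
    _ = _ := by
        refine sum_congr rfl fun k _ => ?_
        rw [mul_assoc, sum_mul_sum]
        simp only [mul_sum]
        refine sum_congr rfl fun p _ => sum_congr rfl fun q _ => ?_
        ring
end

section
/- Let (f_α)_{α ∈ ℕ^r} be a generalized moment sequence of rank r on an abelian group G with f_0 = m an exponential. Then for every α ∈ ℕ^r and all y₁,...,y_{|α|+1}, x ∈ G, the modified difference identity Δ_{m; y₁,...,y_{|α|+1}} * f_α = 0 holds; that is, f_α is a generalized exponential monomial of degree at most |α| corresponding to m. -/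
/-!
Peeling off the term `β = α` (where `f₀ = m`) from the moment identity gives
`Δ_{m;y} f_α = ∑_{β < α} c_{α,β}(y) • f_β`. Since `Δ_{m;y₁,…,y_k}` is linear, strong induction
on `α` shows that `|α| + 1` modified differences kill `f_α`: after the first one, each remaining
`f_β` has `|β| < |α|` and so is killed by the other `|α| ≥ |β| + 1` differences.
-/

/-- The modified difference operator `Δ_{m;y}`. -/
def modDiff {G : Type*} [AddCommGroup G] (m : G → ℂ) (y : G) (f : G → ℂ) : G → ℂ :=
  fun x => f (x + y) - m y * f x

/-- Iterated modified differences `Δ_{m;y₁,...,y_k}` for a list of increments. -/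
def modDiffs {G : Type*} [AddCommGroup G] (m : G → ℂ) : List G → (G → ℂ) → (G → ℂ)
  | [], f => f
  | y :: ys, f => modDiff m y (modDiffs m ys f)

open Finset

section ModifiedDifferences

variable {G : Type*} [AddCommGroup G] (m : G → ℂ)

def modDiffₗ (y : G) : (G → ℂ) →ₗ[ℂ] (G → ℂ) where
  toFun := modDiff m y
  map_add' f g := by ext x; simp only [modDiff, Pi.add_apply]; ring
  map_smul' c f := by ext x; simp only [modDiff, Pi.smul_apply, smul_eq_mul, RingHom.id_apply]; ring

def modDiffsₗ : List G → (G → ℂ) →ₗ[ℂ] (G → ℂ)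
  | [] => LinearMap.id
  | y :: ys => modDiffₗ m y ∘ₗ modDiffsₗ ys

@[simp]
theorem modDiffsₗ_apply (ys : List G) (f : G → ℂ) : modDiffsₗ m ys f = modDiffs m ys f := by
  induction ys with
  | nil => rfl
  | cons y ys ih => simp only [modDiffsₗ, modDiffs, LinearMap.comp_apply, ih]; rfl

theorem modDiffs_zero (ys : List G) : modDiffs m ys 0 = 0 := by
  rw [← modDiffsₗ_apply, map_zero]

theorem modDiffs_append (ys zs : List G) (f : G → ℂ) :
    modDiffs m (ys ++ zs) f = modDiffs m ys (modDiffs m zs f) := by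
  induction ys with
  | nil => rfl
  | cons y ys ih => simp only [List.cons_append, modDiffs, ih]

def IsGenExpMonomial (n : ℕ) (f : G → ℂ) : Prop :=
  ∀ ys : List G, ys.length = n + 1 → modDiffs m ys f = 0

variable {m}

theorem IsGenExpMonomial.modDiffs_eq_zero {n : ℕ} {f : G → ℂ} (hf : IsGenExpMonomial m n f)
    {ys : List G} (hys : n + 1 ≤ ys.length) : modDiffs m ys f = 0 := by
  rw [← ys.take_append_drop (ys.length - (n + 1)), modDiffs_append,
    hf _ (by rw [List.length_drop]; omega), modDiffs_zero]

end ModifiedDifferences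

section MomentSequences

variable {G : Type*} [AddCommGroup G] {r : ℕ}

def IsGenMomentSeq (f : (Fin r → ℕ) → G → ℂ) : Prop :=
  ∀ (α : Fin r → ℕ) (x y : G),
    f α (x + y) = ∑ β ∈ Iic α, (∏ i, ((α i).choose (β i) : ℂ)) * f β x * f (α - β) y

theorem IsGenMomentSeq.modDiff_eq_sum_Iio {f : (Fin r → ℕ) → G → ℂ} (hf : IsGenMomentSeq f)
    (α : Fin r → ℕ) (y : G) :
    modDiff (f 0) y (f α) = ∑ β ∈ Iio α, ((∏ i, ((α i).choose (β i) : ℂ)) * f (α - β) y) • f β := by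
  classical
  ext x
  rw [modDiff, hf, ← Iic_erase, ← add_sum_erase _ _ (mem_Iic.mpr le_rfl), tsub_self]
  simp only [Nat.choose_self, Nat.cast_one, prod_const_one, one_mul, Finset.sum_apply, Pi.smul_apply,
    smul_eq_mul]
  rw [mul_comm (f α x), add_sub_cancel_left]
  exact sum_congr rfl fun β _ => by ring

theorem IsGenMomentSeq.isGenExpMonomial {f : (Fin r → ℕ) → G → ℂ} (hf : IsGenMomentSeq f)
    (α : Fin r → ℕ) : IsGenExpMonomial (f 0) (∑ i, α i) (f α) := by
  induction α using WellFoundedLT.induction with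
  | _ α ih =>
    intro ys hys
    obtain ⟨l, y, rfl⟩ : ∃ l y, ys = l ++ [y] :=
      ⟨ys.dropLast, ys.getLast (List.ne_nil_of_length_pos (by omega)),
        (List.dropLast_append_getLast _).symm⟩
    rw [modDiffs_append, modDiffs, modDiffs, hf.modDiff_eq_sum_Iio, ← modDiffsₗ_apply, map_sum]
    refine sum_eq_zero fun β hβ => ?_
    have hdeg : ∑ i, β i < ∑ i, α i := Fintype.sum_strictMono (mem_Iio.mp hβ)
    rw [map_smul, modDiffsₗ_apply, (ih β (mem_Iio.mp hβ)).modDiffs_eq_zero, smul_zero]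
    simp only [List.length_append, List.length_singleton] at hys
    omega

end MomentSequences

theorem stmt_10_general {G : Type*} [AddCommGroup G] (r : ℕ)
    (f : (Fin r → ℕ) → G → ℂ) (m : G → ℂ)
    (hf : ∀ (α : Fin r → ℕ) (x y : G),
      f α (x + y) = ∑ β ∈ Finset.Iic α,
        (∏ i, ((α i).choose (β i) : ℂ)) * f β x * f (α - β) y)
    (h0 : f 0 = m) :
    ∀ (α : Fin r → ℕ) (ys : List G), ys.length = (∑ i, α i) + 1 →
      modDiffs m ys (f α) = 0 := by
  subst h0
  exact IsGenMomentSeq.isGenExpMonomial hf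

theorem stmt_10 {G : Type*} [AddCommGroup G] (r : ℕ) (hr : 1 ≤ r)
    (f : (Fin r → ℕ) → G → ℂ) (m : G → ℂ)
    (hf : ∀ (α : Fin r → ℕ) (x y : G),
      f α (x + y) = ∑ β ∈ Finset.Iic α,
        (∏ i, ((α i).choose (β i) : ℂ)) * f β x * f (α - β) y)
    (h0 : f 0 = m) (hm : m ≠ 0) :
    ∀ (α : Fin r → ℕ) (ys : List G), ys.length = (∑ i, α i) + 1 →
      modDiffs m ys (f α) = 0 :=
  stmt_10_general r f m hf h0
end

section
/- Let G be an abelian group, m : G → ℂ an exponential, and a₁,...,a_n,... : G → ℂ additive functions (homomorphisms into (ℂ,+)). Define f_n(x) = B_n(a₁(x),...,a_n(x)) m(x), where B_n is the n-th complete Bell polynomial. Then (f_n)_{n∈ℕ} is a generalized moment sequence: f_n(x+y) = Σ_{k=0}^{n} C(n,k) f_k(x) f_{n-k}(y) for all x,y ∈ G. -/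
/-!
The recurrence says that the exponential generating function `Bₜ` of `n ↦ bell n t` solves
`Bₜ' = Tₜ' Bₜ`, `Bₜ(0) = 1`, where `Tₜ` is the exponential generating function of `t`. By the
Leibniz rule `Bₛ Bₜ` solves the same equation as `Bₛ₊ₜ`, and such solutions are unique (their
quotient has derivative zero), so `Bₛ₊ₜ = Bₛ Bₜ`, which is the binomial convolution identity
for Bell polynomials. Multiplying by the exponential `m` gives the moment-sequence identity.
-/

/-- The `n`-th complete (exponential) Bell polynomial, as a function of the
sequence of variables `t 1, t 2, ...` (the value `t 0` is unused). -/
noncomputable def bell : ℕ → (ℕ → ℂ) → ℂ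
  | 0, _ => 1
  | n + 1, t => ∑ i ∈ Finset.range (n + 1),
      (n.choose i : ℂ) * bell (n - i) t * t (i + 1)
decreasing_by omega

open PowerSeries Nat

namespace PowerSeries

variable {K : Type*} [Field K]

noncomputable def egf (u : ℕ → K) : K⟦X⟧ :=
  mk fun n => u n / n !

@[simp]
theorem coeff_egf (u : ℕ → K) (n : ℕ) : coeff n (egf u) = u n / n ! :=
  coeff_mk _ _

@[simp]
theorem constantCoeff_egf (u : ℕ → K) : constantCoeff (egf u) = u 0 := by
  simp [← coeff_zero_eq_constantCoeff_apply]

theorem egf_injective [CharZero K] : Function.Injective (egf : (ℕ → K) → K⟦X⟧) := by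
  intro u v h
  funext n
  have := congrArg (coeff n) h
  simp only [coeff_egf] at this
  exact (div_left_inj' (cast_ne_zero.mpr (factorial_ne_zero n))).mp this

theorem egf_add (u v : ℕ → K) : egf (u + v) = egf u + egf v := by
  ext n
  simp [add_div]

theorem derivative_egf [CharZero K] (u : ℕ → K) :
    d⁄dX K (egf u) = egf fun n => u (n + 1) := by
  ext n
  rw [coeff_derivative, coeff_egf, coeff_egf, factorial_succ]
  push_cast
  field_simp

theorem egf_mul [CharZero K] (u v : ℕ → K) :
    egf u * egf v =
      egf fun n => ∑ k ∈ Finset.range (n + 1), (n.choose k : K) * u k * v (n - k) := by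
  ext n
  rw [coeff_mul, Finset.Nat.sum_antidiagonal_eq_sum_range_succ_mk, coeff_egf, Finset.sum_div]
  refine Finset.sum_congr rfl fun k hk => ?_
  rw [coeff_egf, coeff_egf, cast_choose K (by simpa [Nat.lt_succ_iff] using hk)]
  field_simp
  exact (mul_div_mul_right _ _ (cast_ne_zero.mpr (factorial_ne_zero n))).symm

theorem eq_of_derivative_eq_mul [CharZero K] {F H G : K⟦X⟧} (hF : d⁄dX K F = G * F)
    (hH : d⁄dX K H = G * H) (hF0 : constantCoeff F = 1) (hH0 : constantCoeff H = 1) :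
    F = H := by
  have hFinv : F⁻¹ * F = 1 := PowerSeries.inv_mul_cancel F (by simp [hF0])
  have hquot : H * F⁻¹ = 1 := by
    refine derivative.ext ?_ (by simp [hF0, hH0])
    rw [Derivation.leibniz, derivative_inv', hF, hH, derivative_one]
    linear_combination (-(F⁻¹ * G * H)) * hFinv
  calc F = H * F⁻¹ * F := by rw [hquot, one_mul]
    _ = H := by rw [mul_assoc, hFinv, mul_one]

end PowerSeries

theorem derivative_egf_bell (t : ℕ → ℂ) :
    d⁄dX ℂ (egf fun n => bell n t) = egf (fun n => t (n + 1)) * egf fun n => bell n t := by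
  rw [derivative_egf, egf_mul]
  congr 1
  funext n
  rw [bell]
  exact Finset.sum_congr rfl fun i _ => by ring

theorem egf_bell_add (s t : ℕ → ℂ) :
    egf (fun n => bell n (s + t)) = egf (fun n => bell n s) * egf fun n => bell n t := by
  refine eq_of_derivative_eq_mul (G := egf (fun n => s (n + 1)) + egf fun n => t (n + 1))
    ?_ ?_ (by simp [bell]) (by simp [bell])
  · rw [derivative_egf_bell, ← egf_add]
    rfl
  · rw [Derivation.leibniz, derivative_egf_bell, derivative_egf_bell, smul_eq_mul, smul_eq_mul]
    ring

theorem bell_add (n : ℕ) (s t : ℕ → ℂ) :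
    bell n (s + t) = ∑ k ∈ Finset.range (n + 1), (n.choose k : ℂ) * bell k s * bell (n - k) t :=
  congrFun (egf_injective ((egf_bell_add s t).trans (egf_mul _ _))) n

theorem stmt_14_general {G : Type*} [AddCommGroup G]
    (m : G → ℂ) (hm : ∀ x y : G, m (x + y) = m x * m y)
    (a : ℕ → G → ℂ) (ha : ∀ j, ∀ x y : G, a j (x + y) = a j x + a j y)
    (f : ℕ → G → ℂ) (hf : ∀ n x, f n x = bell n (fun j => a j x) * m x) :
    ∀ (n : ℕ) (x y : G),
      f n (x + y) = ∑ k ∈ Finset.range (n + 1),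
        (n.choose k : ℂ) * f k x * f (n - k) y := by
  intro n x y
  have hadd : (fun j => a j (x + y)) = (fun j => a j x) + fun j => a j y := funext fun j => ha j x y
  rw [hf, hm, hadd, bell_add, Finset.sum_mul]
  refine Finset.sum_congr rfl fun k _ => ?_
  rw [hf, hf]
  ring

theorem stmt_14 {G : Type*} [AddCommGroup G]
    (m : G → ℂ) (hm : ∀ x y : G, m (x + y) = m x * m y) (hm0 : m ≠ 0)
    (a : ℕ → G → ℂ) (ha : ∀ j, ∀ x y : G, a j (x + y) = a j x + a j y)
    (f : ℕ → G → ℂ) (hf : ∀ n x, f n x = bell n (fun j => a j x) * m x) :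
    ∀ (n : ℕ) (x y : G),
      f n (x + y) = ∑ k ∈ Finset.range (n + 1),
        (n.choose k : ℂ) * f k x * f (n - k) y :=
  stmt_14_general m hm a ha f hf
end

section
/- Let G be an abelian group, r ≥ 1, m : G → ℂ an exponential, and a = (a_μ)_{μ ∈ ℕ^r, μ≠0} a family of additive functions G → ℂ. Define f_α(x) = B_α(a(x)) m(x), where B_α is the multivariate Bell polynomial. Then (f_α)_{α ∈ ℕ^r} is a generalized moment sequence of rank r: f_α(x+y) = Σ_{β ≤ α} (α choose β) f_β(x) f_{α-β}(y) for all x,y ∈ G. -/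
/-- The multivariate (complete exponential) Bell polynomial `B_α`, defined so that
`exp (∑_{μ ≠ 0} x_μ t^μ / μ!) = ∑_α B_α(x) t^α / α!`; explicitly
`B_α(x) = ∑_n (α! / n!) ∑_{μ₁+⋯+μ_n = α, μ_i ≠ 0} ∏_i x_{μ_i} / μ_i!`. -/
noncomputable def mvBell {r : ℕ} (α : Fin r → ℕ) (x : (Fin r → ℕ) → ℂ) : ℂ :=
  ∑ n ∈ Finset.range ((∑ i, α i) + 1),
    ((∏ i, Nat.factorial (α i) : ℕ) : ℂ) / ((Nat.factorial n : ℕ) : ℂ) *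
      ∑ μ ∈ (Fintype.piFinset fun _ : Fin n => Finset.Iic α).filter
          (fun μ => (∑ j, μ j) = α ∧ ∀ j, μ j ≠ 0),
        ∏ j, x (μ j) / ((∏ i, Nat.factorial (μ j i) : ℕ) : ℂ)


/-
Writing `g_x = ∑_{μ ≠ 0} x_μ t^μ / μ!`, the Bell polynomial `B_α(x)` is `α!` times the coefficient
of `t^α` in `exp g_x`. Since `g_{x+y} = g_x + g_y`, the functional equation `exp (g + h) =
exp g * exp h` gives the addition formula for `B_α`; the one for `f_α = B_α(a(·)) m` then follows
from the additivity of each `a_μ` and the multiplicativity of `m`. To make `exp` meaningful we work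
modulo the ideal of series vanishing at all exponents `≤ α`: there `g_x` is nilpotent, and a long
enough truncation of the exponential series is its exact exponential.
-/

namespace Finset.HasAntidiagonal

variable {A M : Type*} [AddCommMonoid A] [PartialOrder A] [CanonicallyOrderedAdd A] [Sub A]
  [OrderedSub A] [AddLeftReflectLE A] [HasAntidiagonal A] [LocallyFiniteOrderBot A]
  [AddCommMonoid M]

theorem sum_antidiagonal_eq_sum_Iic (n : A) (f : A → A → M) :
    ∑ p ∈ antidiagonal n, f p.1 p.2 = ∑ a ∈ Iic n, f a (n - a) := by
  refine Finset.sum_nbij' Prod.fst (fun a => (a, n - a)) (fun p hp => ?_) (fun a ha => ?_)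
    (fun p hp => ?_) (fun _ _ => rfl) (fun p hp => ?_)
  · exact mem_Iic.2 (antidiagonal.fst_le hp)
  · exact mem_antidiagonal.2 (add_tsub_cancel_of_le (mem_Iic.1 ha))
  · rw [mem_antidiagonal] at hp
    simp [← hp]
  · rw [mem_antidiagonal] at hp
    simp [← hp]

end Finset.HasAntidiagonal

namespace MvPowerSeries

variable {σ R : Type*} [CommRing R]

noncomputable def lowCoeffIdeal (d : σ →₀ ℕ) : Ideal (MvPowerSeries σ R) :=
  (LinearTopology.basis σ R (⊥, d)).asIdeal

theorem mem_lowCoeffIdeal {d : σ →₀ ℕ} {f : MvPowerSeries σ R} :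
    f ∈ lowCoeffIdeal d ↔ ∀ e ≤ d, coeff e f = 0 := by
  simp [lowCoeffIdeal, TwoSidedIdeal.mem_asIdeal, LinearTopology.mem_basis_iff]

theorem coeff_eq_of_mk_lowCoeffIdeal_eq {d : σ →₀ ℕ} {f g : MvPowerSeries σ R}
    (h : Ideal.Quotient.mk (lowCoeffIdeal d) f = Ideal.Quotient.mk (lowCoeffIdeal d) g) :
    coeff d f = coeff d g := by
  rw [Ideal.Quotient.eq, mem_lowCoeffIdeal] at h
  simpa [sub_eq_zero] using h d le_rfl

theorem mk_lowCoeffIdeal_pow_eq_zero {d : σ →₀ ℕ} {g : MvPowerSeries σ R}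
    (hg : constantCoeff g = 0) {N : ℕ} (hN : d.degree < N) :
    Ideal.Quotient.mk (lowCoeffIdeal d) g ^ N = 0 := by
  rw [← map_pow, Ideal.Quotient.eq_zero_iff_mem, mem_lowCoeffIdeal]
  intro e he
  refine coeff_of_lt_order (lt_of_lt_of_le ?_ (le_order_pow_of_constantCoeff_eq_zero N hg))
  exact_mod_cast (Finsupp.degree_mono he).trans_lt hN

variable [Algebra ℚ R]

noncomputable def expTrunc (N : ℕ) (g : MvPowerSeries σ R) : MvPowerSeries σ R :=
  ∑ n ∈ Finset.range N, (n.factorial : ℚ)⁻¹ • g ^ n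

theorem mk_expTrunc {d : σ →₀ ℕ} {g : MvPowerSeries σ R}
    (hg : constantCoeff g = 0) {N : ℕ} (hN : d.degree < N) :
    Ideal.Quotient.mk (lowCoeffIdeal d) (expTrunc N g) =
      IsNilpotent.exp (Ideal.Quotient.mk (lowCoeffIdeal d) g) := by
  rw [IsNilpotent.exp_eq_sum (mk_lowCoeffIdeal_pow_eq_zero hg hN), expTrunc,
    ← Ideal.Quotient.mkₐ_eq_mk ℚ, map_sum]
  simp [map_smul, map_pow]

theorem coeff_expTrunc_congr {d : σ →₀ ℕ} {g : MvPowerSeries σ R}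
    (hg : constantCoeff g = 0) {N M : ℕ} (hN : d.degree < N) (hM : d.degree < M) :
    coeff d (expTrunc N g) = coeff d (expTrunc M g) :=
  coeff_eq_of_mk_lowCoeffIdeal_eq <| by rw [mk_expTrunc hg hN, mk_expTrunc hg hM]

theorem coeff_expTrunc_add {d : σ →₀ ℕ} {g h : MvPowerSeries σ R}
    (hg : constantCoeff g = 0) (hh : constantCoeff h = 0) {N : ℕ} (hN : d.degree < N) :
    coeff d (expTrunc N (g + h)) = coeff d (expTrunc N g * expTrunc N h) := by
  refine coeff_eq_of_mk_lowCoeffIdeal_eq ?_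
  rw [map_mul, mk_expTrunc (by simp [hg, hh]) hN, mk_expTrunc hg hN, mk_expTrunc hh hN, map_add,
    IsNilpotent.exp_add_of_commute (Commute.all _ _) ⟨N, mk_lowCoeffIdeal_pow_eq_zero hg hN⟩
      ⟨N, mk_lowCoeffIdeal_pow_eq_zero hh hN⟩]

end MvPowerSeries

open MvPowerSeries

variable {r : ℕ}

/-- `∑_{μ ≠ 0} x_μ t^μ / μ!`, whose exponential has `mvBell α x / α!` as coefficient of `t^α`. -/
noncomputable def bellGenSeries (x : (Fin r → ℕ) → ℂ) : MvPowerSeries (Fin r) ℂ :=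
  fun d => if d = 0 then 0 else x ⇑d / ((∏ i, Nat.factorial (d i) : ℕ) : ℂ)

theorem coeff_bellGenSeries (x : (Fin r → ℕ) → ℂ) (d : Fin r →₀ ℕ) :
    coeff d (bellGenSeries x) =
      if d = 0 then 0 else x ⇑d / ((∏ i, Nat.factorial (d i) : ℕ) : ℂ) :=
  rfl

theorem constantCoeff_bellGenSeries (x : (Fin r → ℕ) → ℂ) :
    constantCoeff (bellGenSeries x) = 0 := by
  rw [← coeff_zero_eq_constantCoeff_apply, coeff_bellGenSeries, if_pos rfl]

theorem bellGenSeries_add (x y : (Fin r → ℕ) → ℂ) :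
    bellGenSeries (x + y) = bellGenSeries x + bellGenSeries y := by
  ext d
  simp only [map_add, coeff_bellGenSeries, Pi.add_apply]
  split_ifs <;> simp [add_div]

theorem coeff_bellGenSeries_pow (x : (Fin r → ℕ) → ℂ) (n : ℕ) (d : Fin r →₀ ℕ) :
    coeff d (bellGenSeries x ^ n) =
      ∑ μ ∈ (Fintype.piFinset fun _ : Fin n => Finset.Iic ⇑d).filter
          (fun μ => (∑ j, μ j) = ⇑d ∧ ∀ j, μ j ≠ 0),
        ∏ j, x (μ j) / ((∏ i, Nat.factorial (μ j i) : ℕ) : ℂ) := by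
  classical
  rw [← Fin.prod_const n, coeff_prod,
    ← Finset.sum_filter_of_ne (p := fun l => ∀ j, l j ≠ 0) fun l _ hl j hj =>
      hl (Finset.prod_eq_zero (Finset.mem_univ j)
        (by rw [hj]; exact constantCoeff_bellGenSeries x))]
  let e : (Fin n →₀ Fin r →₀ ℕ) ≃ (Fin n → Fin r → ℕ) :=
    Finsupp.equivFunOnFinite.trans (Equiv.piCongrRight fun _ => Finsupp.equivFunOnFinite)
  have he : ∀ l j, e l j = ⇑(l j) := fun _ _ => rfl
  refine Finset.sum_equiv e (fun l => ?_) (fun l hl => ?_)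
  · simp only [Finset.mem_filter, Finset.mem_finsuppAntidiag, Fintype.mem_piFinset,
      Finset.mem_Iic, he, Finset.subset_univ, and_true, ne_eq, Finsupp.coe_eq_zero,
      ← Finsupp.coe_finsetSum, DFunLike.coe_fn_eq, Finsupp.coe_le_coe]
    exact ⟨fun h => ⟨fun j => h.1 ▸ Finset.single_le_sum (fun _ _ => zero_le)
      (Finset.mem_univ j), h⟩, fun h => h.2⟩
  · rw [Finset.mem_filter] at hl
    simp only [he, coeff_bellGenSeries, if_neg (hl.2 _), Finset.prod_div_distrib]

theorem mvBell_eq_coeff_expTrunc (d : Fin r →₀ ℕ) (x : (Fin r → ℕ) → ℂ) :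
    mvBell ⇑d x = ((∏ i, Nat.factorial (d i) : ℕ) : ℂ) *
      coeff d (expTrunc (d.degree + 1) (bellGenSeries x)) := by
  rw [mvBell, expTrunc, map_sum, Finset.mul_sum, Finsupp.degree_eq_sum]
  refine Finset.sum_congr rfl fun n _ => ?_
  rw [map_rat_smul, coeff_bellGenSeries_pow, Rat.smul_def]
  push_cast
  ring

theorem mvBell_add (α : Fin r → ℕ) (x y : (Fin r → ℕ) → ℂ) :
    mvBell α (x + y) = ∑ β ∈ Finset.Iic α,
      (∏ i, ((α i).choose (β i) : ℂ)) * mvBell β x * mvBell (α - β) y := by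
  obtain ⟨d, rfl⟩ : ∃ d : Fin r →₀ ℕ, ⇑d = α := ⟨Finsupp.equivFunOnFinite.symm α, rfl⟩
  have hx := constantCoeff_bellGenSeries x
  have hy := constantCoeff_bellGenSeries y
  have mvBell_le (z : (Fin r → ℕ) → ℂ) {b : Fin r →₀ ℕ} (hb : b ≤ d) :
      mvBell ⇑b z = ((∏ i, Nat.factorial (b i) : ℕ) : ℂ) *
        coeff b (expTrunc (d.degree + 1) (bellGenSeries z)) := by
    rw [mvBell_eq_coeff_expTrunc, coeff_expTrunc_congr (constantCoeff_bellGenSeries z)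
      (lt_add_one _) (Nat.lt_succ_of_le (Finsupp.degree_mono hb))]
  rw [mvBell_eq_coeff_expTrunc, bellGenSeries_add, coeff_expTrunc_add hx hy (lt_add_one _),
    coeff_mul, Finset.HasAntidiagonal.sum_antidiagonal_eq_sum_Iic
      (f := fun b c => coeff b (expTrunc _ (bellGenSeries x)) *
        coeff c (expTrunc _ (bellGenSeries y))), Finset.mul_sum]
  refine Finset.sum_equiv Finsupp.equivFunOnFinite
    (fun b => by rw [Finset.mem_Iic, Finset.mem_Iic]; exact Finsupp.coe_le_coe.symm) fun b hb => ?_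
  rw [Finset.mem_Iic] at hb
  have hfac : ∏ i, (d i).factorial =
      (∏ i, (d i).choose (b i)) * (∏ i, (b i).factorial) * ∏ i, ((d - b) i).factorial := by
    rw [← Finset.prod_mul_distrib, ← Finset.prod_mul_distrib]
    exact Finset.prod_congr rfl fun i _ => (Nat.choose_mul_factorial_mul_factorial (hb i)).symm
  rw [show Finsupp.equivFunOnFinite b = ⇑b from rfl, ← Finsupp.coe_tsub, mvBell_le x hb,
    mvBell_le y tsub_le_self, hfac]
  push_cast
  ring

theorem mvBell_congr (α : Fin r → ℕ) {x y : (Fin r → ℕ) → ℂ}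
    (h : ∀ μ : Fin r → ℕ, μ ≠ 0 → x μ = y μ) : mvBell α x = mvBell α y := by
  unfold mvBell
  refine Finset.sum_congr rfl fun n _ => ?_
  congr 1
  refine Finset.sum_congr rfl fun μ hμ => ?_
  have hne := (Finset.mem_filter.mp hμ).2.2
  exact Finset.prod_congr rfl fun j _ => by rw [h _ (hne j)]

theorem stmt_17_general {G : Type*} [AddCommGroup G] (r : ℕ)
    (m : G → ℂ) (hm : ∀ x y : G, m (x + y) = m x * m y)
    (a : (Fin r → ℕ) → G → ℂ)
    (ha : ∀ μ : Fin r → ℕ, μ ≠ 0 → ∀ x y : G, a μ (x + y) = a μ x + a μ y)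
    (f : (Fin r → ℕ) → G → ℂ)
    (hf : ∀ (α : Fin r → ℕ) (x : G), f α x = mvBell α (fun μ => a μ x) * m x) :
    ∀ (α : Fin r → ℕ) (x y : G),
      f α (x + y) = ∑ β ∈ Finset.Iic α,
        (∏ i, ((α i).choose (β i) : ℂ)) * f β x * f (α - β) y := by
  intro α x y
  rw [hf, hm, mvBell_congr α (y := (fun μ => a μ x) + fun μ => a μ y) fun μ hμ => ha μ hμ x y,
    mvBell_add, Finset.sum_mul]
  refine Finset.sum_congr rfl fun β _ => ?_
  rw [hf, hf]
  ring

theorem stmt_17 {G : Type*} [AddCommGroup G] (r : ℕ) (hr : 1 ≤ r)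
    (m : G → ℂ) (hm : ∀ x y : G, m (x + y) = m x * m y) (hm0 : m ≠ 0)
    (a : (Fin r → ℕ) → G → ℂ)
    (ha : ∀ μ : Fin r → ℕ, μ ≠ 0 → ∀ x y : G, a μ (x + y) = a μ x + a μ y)
    (f : (Fin r → ℕ) → G → ℂ)
    (hf : ∀ (α : Fin r → ℕ) (x : G), f α x = mvBell α (fun μ => a μ x) * m x) :
    ∀ (α : Fin r → ℕ) (x y : G),
      f α (x + y) = ∑ β ∈ Finset.Iic α,
        (∏ i, ((α i).choose (β i) : ℂ)) * f β x * f (α - β) y :=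
  stmt_17_general r m hm a ha f hf
end
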